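/- Let n ≥ 0 be an integer and ε ∈ ℝ. For every complex z with |z−1| < 1, the series Σ_{m≥0} P_n^{(m)}(ε) (z−1)^m converges and equals (1 − ε/z²)^n; that is, the Taylor coefficients at z = 1 of z ↦ (1 − ε/z²)^n are exactly the P_n^{(m)}(ε), m ≥ 0. -/

import Mathlib

open scoped BigOperators

/-- Pochhammer symbol `(a)_k = a(a+1)⋯(a+k-1)` over ℝ. -/
noncomputable def pochR (a : ℝ) (k : ℕ) : ℝ := ∏ i ∈ Finset.range k, (a + i)

/-- The polynomials `P_n^{(m)}(ε) = ((-1)^m/m!) Σ_{k=0}^n C(n,k) (-ε)^k (2k)_m`. -/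
noncomputable def Ppoly (n m : ℕ) (ε : ℝ) : ℝ :=
  ((-1 : ℝ) ^ m / (m.factorial : ℝ)) * ∑ k ∈ Finset.range (n + 1),
    (n.choose k : ℝ) * (-ε) ^ k * pochR (2 * k) m

/-!
Expanding `(1 - ε/z²)^n = Σ_k C(n,k) (-ε)^k z^{-2k}` by the binomial theorem, it suffices to
expand each `z^{-p}` at `z = 1`. This is the negative binomial series
`z^{-p} = (1 - (1 - z))^{-p} = Σ_m (p)_m / m! · (1 - z)^m`, valid for `|1 - z| < 1`.
-/

open scoped Nat

lemma pochR_natCast (a m : ℕ) : pochR a m = a.ascFactorial m := by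
  induction m with
  | zero => simp [pochR]
  | succ m ih =>
    rw [pochR, Finset.prod_range_succ, ← pochR, ih, Nat.ascFactorial_succ]
    push_cast
    ring

lemma pochR_natCast_eq_factorial_mul_choose (p m : ℕ) :
    pochR p m = m ! * (p + m - 1).choose m := by
  rw [pochR_natCast, Nat.ascFactorial_eq_factorial_mul_choose']
  push_cast
  rfl

-- Truncated subtraction makes `(p + m - 1).choose m` correct also for `p = 0`: it is `1, 0, 0, …`.
lemma hasSum_choose_mul_geometric_eq_inv_pow {𝕜 : Type*} [NormedDivisionRing 𝕜]
    (p : ℕ) {r : 𝕜} (hr : ‖r‖ < 1) :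
    HasSum (fun m ↦ ((p + m - 1).choose m : 𝕜) * r ^ m) ((1 - r) ^ p)⁻¹ := by
  cases p with
  | zero =>
    convert hasSum_single (f := fun m ↦ ((0 + m - 1).choose m : 𝕜) * r ^ m) 0 ?_ using 1
    · simp
    · intro m hm
      simp [Nat.choose_eq_zero_of_lt (show m - 1 < m by omega)]
  | succ q =>
    convert hasSum_choose_mul_geometric_of_norm_lt_one q hr using 1
    · ext m
      rw [show q + 1 + m - 1 = m + q by omega, Nat.choose_symm_add]
    · rw [one_div]

lemma hasSum_inv_pow_taylor_at_one (p : ℕ) {z : ℂ} (hz : ‖z - 1‖ < 1) :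
    HasSum (fun m ↦ (((-1 : ℝ) ^ m / m ! * pochR p m : ℝ) : ℂ) * (z - 1) ^ m) (z ^ p)⁻¹ := by
  have hcoef : (fun m ↦ (((-1 : ℝ) ^ m / m ! * pochR p m : ℝ) : ℂ) * (z - 1) ^ m) =
      fun m ↦ ((p + m - 1).choose m : ℂ) * (1 - z) ^ m := by
    ext m
    have hfac : (m ! : ℂ) ≠ 0 := by exact_mod_cast m.factorial_ne_zero
    rw [pochR_natCast_eq_factorial_mul_choose, show 1 - z = -1 * (z - 1) by ring, mul_pow]
    push_cast
    field_simp
  have hr : ‖1 - z‖ < 1 := by rwa [norm_sub_rev]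
  simpa only [hcoef, sub_sub_cancel] using hasSum_choose_mul_geometric_eq_inv_pow p hr

theorem stmt8 (n : ℕ) (ε : ℝ) (z : ℂ) (hz : ‖z - 1‖ < 1) :
    HasSum (fun m : ℕ => ((Ppoly n m ε : ℝ) : ℂ) * (z - 1) ^ m)
      ((1 - (ε : ℂ) / z ^ 2) ^ n) := by
  have termwise := hasSum_sum fun k (_ : k ∈ Finset.range (n + 1)) ↦
    (hasSum_inv_pow_taylor_at_one (2 * k) hz).mul_left ((n.choose k : ℂ) * (-ε : ℂ) ^ k)
  have hcoef : (fun m ↦ ((Ppoly n m ε : ℝ) : ℂ) * (z - 1) ^ m) = fun m ↦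
      ∑ k ∈ Finset.range (n + 1), (n.choose k : ℂ) * (-ε : ℂ) ^ k *
        ((((-1 : ℝ) ^ m / m ! * pochR (2 * k : ℕ) m : ℝ) : ℂ) * (z - 1) ^ m) := by
    ext m
    simp only [Ppoly]
    push_cast
    rw [Finset.mul_sum, Finset.sum_mul]
    refine Finset.sum_congr rfl fun k _ ↦ ?_
    ring
  have hvalue : (1 - (ε : ℂ) / z ^ 2) ^ n =
      ∑ k ∈ Finset.range (n + 1), (n.choose k : ℂ) * (-ε : ℂ) ^ k * (z ^ (2 * k))⁻¹ := by
    rw [sub_eq_neg_add, div_eq_mul_inv, add_pow]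
    refine Finset.sum_congr rfl fun k _ ↦ ?_
    rw [one_pow, mul_one, ← neg_mul, mul_pow, ← inv_pow, ← pow_mul]
    ring
  rwa [hcoef, hvalue]
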